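/- arXiv:2212.14666 — 2 statements merged into one kernel-verified Lean document; each statement's English description precedes it below -/
import Mathlib

section
/- For all integers n, j ≥ 0 and k ≥ 1, the numbers T(n,k,r) and t(n,k,r) are inverse to each other in the second sense: ∑_{i≥0} T(n,k,i)·t(i,k,j) = δ_{nj}, where δ_{nj} is the Kronecker delta. -/
open Finset Polynomial

/-- Stirling numbers of the second kind: the number of partitions (equivalence
relations) of an `n`-element set into `r` nonempty blocks. -/
noncomputable def stirS2 (n r : ℕ) : ℕ :=
  Nat.card {p : Setoid (Fin n) // Nat.card (Quotient p) = r}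

/-- Signed Stirling numbers of the first kind, defined by
`x(x-1)⋯(x-n+1) = ∑_{r=0}^{n} s(n,r) xʳ`. -/
noncomputable def stirS1 (n r : ℕ) : ℤ :=
  (∏ i ∈ Finset.range n, (Polynomial.X - Polynomial.C (i : ℤ))).coeff r

lemma descPoch_eq_prod (n : ℕ) :
    descPochhammer ℤ n = ∏ i ∈ Finset.range n, (X - C (i : ℤ)) := by
  induction n with
  | zero => simp
  | succ n ih =>
    rw [descPochhammer_succ_right, ih, Finset.prod_range_succ]
    norm_cast

lemma stirS1_eq (n r : ℕ) : stirS1 n r = (descPochhammer ℤ n).coeff r := by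
  rw [stirS1, descPoch_eq_prod]

lemma stirS1_eq_zero {n r : ℕ} (h : n < r) : stirS1 n r = 0 := by
  rw [stirS1_eq]
  exact coeff_eq_zero_of_natDegree_lt (by rw [descPochhammer_natDegree]; exact h)

lemma card_quot_le {n : ℕ} (p : Setoid (Fin n)) : Nat.card (Quotient p) ≤ n := by
  simpa using Nat.card_le_card_of_surjective _ (Quotient.exists_rep (s := p))

lemma stirS2_eq_zero {n r : ℕ} (h : n < r) : stirS2 n r = 0 := by
  rw [stirS2, Nat.card_eq_zero]
  left
  constructor
  rintro ⟨p, hp⟩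
  exact absurd (hp ▸ card_quot_le p) (not_le.mpr h)

noncomputable instance setoidFintype (n : ℕ) : Fintype (Setoid (Fin n)) := by
  classical
  have : Finite (Setoid (Fin n)) := by
    apply Finite.of_injective (fun p : Setoid (Fin n) => (p.r : Fin n → Fin n → Prop))
    intro p q h
    exact Setoid.ext fun a b => by rw [show p.r = q.r from h]
  exact Fintype.ofFinite _

/-- functions with given kernel correspond to injections from the quotient -/
noncomputable def kerFiberEquiv {n x : ℕ} (p : Setoid (Fin n)) :
    {f : Fin n → Fin x // Setoid.ker f = p} ≃ (Quotient p ↪ Fin x) where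
  toFun := fun ⟨f, hf⟩ =>
    ⟨Quotient.lift f (fun a b hab => by
        have : Setoid.ker f a b := hf ▸ hab
        exact this),
     by
       intro a b
       induction a using Quotient.ind
       induction b using Quotient.ind
       intro h
       exact Quotient.sound (hf ▸ (h : Setoid.ker _ _ _))⟩
  invFun := fun g =>
    ⟨fun a => g (Quotient.mk p a), by
      apply Setoid.ext
      intro a b
      constructor
      · intro h
        exact Quotient.exact (g.injective (h : _ = _))
      · intro h
        exact congrArg g (Quotient.sound h)⟩
  left_inv := fun ⟨f, hf⟩ => rfl
  right_inv := fun g => by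
    ext a
    induction a using Quotient.ind
    rfl

lemma key_count (n x : ℕ) :
    x ^ n = ∑ m ∈ Finset.range (n + 1), stirS2 n m * x.descFactorial m := by
  classical
  have h1 : x ^ n = Fintype.card (Fin n → Fin x) := by simp
  have h3 : Fintype.card (Fin n → Fin x)
      = ∑ p : Setoid (Fin n), Fintype.card {f : Fin n → Fin x // Setoid.ker f = p} := by
    rw [← Fintype.card_sigma]
    exact Fintype.card_congr (Equiv.sigmaFiberEquiv _).symm
  rw [h1, h3]
  have h2 : ∀ p : Setoid (Fin n),
      Fintype.card {f : Fin n → Fin x // Setoid.ker f = p}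
        = x.descFactorial (Nat.card (Quotient p)) := by
    intro p
    rw [Fintype.card_congr (kerFiberEquiv p), Fintype.card_embedding_eq,
      Fintype.card_fin, Nat.card_eq_fintype_card]
  simp_rw [h2]
  rw [← Finset.sum_fiberwise_of_maps_to (g := fun p : Setoid (Fin n) => Nat.card (Quotient p))
      (t := Finset.range (n + 1)) (fun p _ => Finset.mem_range.mpr (Nat.lt_succ_of_le (card_quot_le p)))]
  refine Finset.sum_congr rfl fun m _ => ?_
  rw [stirS2, Nat.card_eq_fintype_card, Fintype.card_subtype]
  rw [Finset.sum_congr rfl fun p hp => by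
    rw [(Finset.mem_filter.mp hp).2]]
  rw [Finset.sum_const, smul_eq_mul]

lemma Xpow_eq (n : ℕ) :
    (X ^ n : ℤ[X]) = ∑ m ∈ Finset.range (n + 1), C ((stirS2 n m : ℤ)) * descPochhammer ℤ m := by
  apply eq_of_infinite_eval_eq
  apply Set.Infinite.mono (s := Set.range ((↑) : ℕ → ℤ))
  · rintro _ ⟨x, rfl⟩
    simp only [Set.mem_setOf_eq, eval_pow, eval_X, eval_finset_sum, eval_mul, eval_C]
    have h0 := key_count n x
    have h1 : ((x ^ n : ℕ) : ℤ) = ((∑ m ∈ Finset.range (n + 1), stirS2 n m * x.descFactorial m : ℕ) : ℤ) :=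
      congrArg _ h0
    push_cast at h1
    rw [h1]
    refine Finset.sum_congr rfl fun m _ => ?_
    rw [descPochhammer_eval_eq_descFactorial]
  · exact Set.infinite_range_of_injective Nat.cast_injective

lemma orth_one (n j N : ℕ) (hN : n ≤ N) :
    ∑ m ∈ Finset.range (N + 1), (stirS2 n m : ℤ) * stirS1 m j = if n = j then 1 else 0 := by
  have hsub : ∑ m ∈ Finset.range (N + 1), (stirS2 n m : ℤ) * stirS1 m j
      = ∑ m ∈ Finset.range (n + 1), (stirS2 n m : ℤ) * stirS1 m j := by
    symm
    apply Finset.sum_subset (by intro a ha; simp only [Finset.mem_range] at *; omega)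
    intro m hm hm'
    simp only [Finset.mem_range, not_lt] at *
    rw [stirS2_eq_zero (by omega)]
    simp
  rw [hsub]
  have := congrArg (fun p => Polynomial.coeff p j) (Xpow_eq n)
  simp only [finset_sum_coeff, coeff_C_mul, coeff_X_pow] at this
  simp_rw [stirS1_eq]
  rw [← this]
  simp [eq_comm]


/-- `Tnum n k r = T(n,k,r) = ∑_{n ≥ i_1 ≥ … ≥ i_{k-1} ≥ r} ∏_{j=1}^{k} S(i_{j-1}, i_j)`
(with `i_0 = n`, `i_k = r`), written via the equivalent recursion on `k`. -/
noncomputable def Tnum : ℕ → ℕ → ℕ → ℕ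
  | n, 0, r => if n = r then 1 else 0
  | n, k + 1, r => ∑ m ∈ Finset.Icc r n, stirS2 n m * Tnum m k r

/-- `tnum n k r = t(n,k,r) = ∑_{n ≥ i_1 ≥ … ≥ i_{k-1} ≥ r} ∏_{j=1}^{k} s(i_{j-1}, i_j)`
(with `i_0 = n`, `i_k = r`), written via the equivalent recursion on `k`. -/
noncomputable def tnum : ℕ → ℕ → ℕ → ℤ
  | n, 0, r => if n = r then 1 else 0
  | n, k + 1, r => ∑ m ∈ Finset.Icc r n, stirS1 n m * tnum m k r

lemma Tnum_eq_zero {n r : ℕ} (k : ℕ) (h : n < r) : Tnum n k r = 0 := by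
  cases k with
  | zero => exact if_neg (by omega)
  | succ k => rw [Tnum, Finset.Icc_eq_empty (by omega), Finset.sum_empty]

lemma tnum_eq_zero {n r : ℕ} (k : ℕ) (h : n < r) : tnum n k r = 0 := by
  cases k with
  | zero => exact if_neg (by omega)
  | succ k => rw [tnum, Finset.Icc_eq_empty (by omega), Finset.sum_empty]

lemma Tnum_succ_range (n k r N : ℕ) (hN : n ≤ N) :
    Tnum n (k + 1) r = ∑ m ∈ Finset.range (N + 1), stirS2 n m * Tnum m k r := by
  rw [Tnum]
  apply Finset.sum_subset
  · intro m hm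
    simp only [Finset.mem_Icc, Finset.mem_range] at *
    omega
  · intro m hm hm'
    simp only [Finset.mem_Icc, Finset.mem_range, not_and, not_le] at *
    rcases le_or_gt m n with h | h
    · have hmr : m < r := by
        rcases lt_or_ge m r with h' | h'
        · exact h'
        · exact absurd (hm' h') (by omega)
      rw [Tnum_eq_zero k hmr, mul_zero]
    · rw [stirS2_eq_zero h, zero_mul]

lemma tnum_succ_range (n k r N : ℕ) (hN : n ≤ N) :
    tnum n (k + 1) r = ∑ m ∈ Finset.range (N + 1), stirS1 n m * tnum m k r := by
  rw [tnum]
  apply Finset.sum_subset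
  · intro m hm
    simp only [Finset.mem_Icc, Finset.mem_range] at *
    omega
  · intro m hm hm'
    simp only [Finset.mem_Icc, Finset.mem_range, not_and, not_le] at *
    rcases le_or_gt m n with h | h
    · have hmr : m < r := by
        rcases lt_or_ge m r with h' | h'
        · exact h'
        · exact absurd (hm' h') (by omega)
      rw [tnum_eq_zero k hmr, mul_zero]
    · rw [stirS1_eq_zero h, zero_mul]

lemma Tnum_one (n i : ℕ) : Tnum n 1 i = stirS2 n i := by
  rw [Tnum_succ_range n 0 i n le_rfl]
  simp only [Tnum, mul_ite, mul_one, mul_zero]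
  rw [Finset.sum_ite_eq' (Finset.range (n + 1)) i (fun m => stirS2 n m)]
  split_ifs with h
  · rfl
  · rw [stirS2_eq_zero (by simp only [Finset.mem_range] at h; omega)]

lemma tnum_one (n i : ℕ) : tnum n 1 i = stirS1 n i := by
  rw [tnum_succ_range n 0 i n le_rfl]
  simp only [tnum, mul_ite, mul_one, mul_zero]
  rw [Finset.sum_ite_eq' (Finset.range (n + 1)) i (fun m => stirS1 n m)]
  split_ifs with h
  · rfl
  · rw [stirS1_eq_zero (by simp only [Finset.mem_range] at h; omega)]

lemma tnum_succ_right (k : ℕ) : ∀ n j N : ℕ, n ≤ N →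
    tnum n (k + 1) j = ∑ l ∈ Finset.range (N + 1), tnum n k l * stirS1 l j := by
  induction k with
  | zero =>
    intro n j N hN
    rw [tnum_one]
    simp only [tnum, ite_mul, one_mul, zero_mul]
    rw [Finset.sum_ite_eq (Finset.range (N + 1)) n (fun l => stirS1 l j)]
    rw [if_pos (Finset.mem_range.mpr (by omega))]
  | succ k ih =>
    intro n j N hN
    rw [tnum_succ_range n (k + 1) j N hN]
    have : ∀ m ∈ Finset.range (N + 1), stirS1 n m * tnum m (k + 1) j
        = ∑ l ∈ Finset.range (N + 1), stirS1 n m * (tnum m k l * stirS1 l j) := by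
      intro m hm
      rw [ih m j N (by simp only [Finset.mem_range] at hm; omega), Finset.mul_sum]
    rw [Finset.sum_congr rfl this, Finset.sum_comm]
    refine Finset.sum_congr rfl fun l hl => ?_
    rw [tnum_succ_range n k l N hN, Finset.sum_mul]
    exact Finset.sum_congr rfl fun m _ => (mul_assoc _ _ _).symm


/-- The numbers `T(n,k,r)` and `t(n,k,r)` are inverse to each other in the
second sense: `∑_{i ≥ 0} T(n,k,i) ⬝ t(i,k,j) = δ_{nj}`.  Since `T(n,k,i) = 0`
for `i > n`, the full sum over `i ≥ 0` is expressed as the sum over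
`0 ≤ i ≤ N` for any `N ≥ n`. -/
theorem T_t_inverse_second (n j k : ℕ) (hk : 1 ≤ k) (N : ℕ) (hN : n ≤ N) :
    (∑ i ∈ Finset.range (N + 1), (Tnum n k i : ℤ) * tnum i k j) =
      if n = j then 1 else 0 := by
  obtain ⟨k, rfl⟩ : ∃ k', k = k' + 1 := ⟨k - 1, by omega⟩
  clear hk
  induction k generalizing n j N with
  | zero =>
    simp_rw [show 0 + 1 = 1 from rfl, Tnum_one, tnum_one]
    exact orth_one n j N hN
  | succ k ih =>
    have hT : ∀ i, (Tnum n (k + 2) i : ℤ)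
        = ∑ m ∈ Finset.range (N + 1), (stirS2 n m : ℤ) * (Tnum m (k + 1) i : ℤ) := by
      intro i
      rw [Tnum_succ_range n (k + 1) i N hN]
      push_cast
      rfl
    have ht : ∀ i ∈ Finset.range (N + 1), tnum i (k + 2) j
        = ∑ l ∈ Finset.range (N + 1), tnum i (k + 1) l * stirS1 l j := fun i hi =>
      tnum_succ_right (k + 1) i j N (by simp only [Finset.mem_range] at hi; omega)
    calc ∑ i ∈ Finset.range (N + 1), (Tnum n (k + 2) i : ℤ) * tnum i (k + 2) j
        = ∑ i ∈ Finset.range (N + 1), ∑ m ∈ Finset.range (N + 1), ∑ l ∈ Finset.range (N + 1),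
            (stirS2 n m : ℤ) * stirS1 l j * ((Tnum m (k + 1) i : ℤ) * tnum i (k + 1) l) := by
          refine Finset.sum_congr rfl fun i hi => ?_
          rw [hT i, ht i hi, Finset.sum_mul_sum]
          exact Finset.sum_congr rfl fun m _ => Finset.sum_congr rfl fun l _ => by ring
      _ = ∑ m ∈ Finset.range (N + 1), ∑ l ∈ Finset.range (N + 1),
            (stirS2 n m : ℤ) * stirS1 l j *
              (∑ i ∈ Finset.range (N + 1), (Tnum m (k + 1) i : ℤ) * tnum i (k + 1) l) := by
          rw [Finset.sum_comm]
          refine Finset.sum_congr rfl fun m _ => ?_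
          rw [Finset.sum_comm]
          exact Finset.sum_congr rfl fun l _ => (Finset.mul_sum _ _ _).symm
      _ = ∑ m ∈ Finset.range (N + 1), ∑ l ∈ Finset.range (N + 1),
            (stirS2 n m : ℤ) * stirS1 l j * (if m = l then 1 else 0) := by
          refine Finset.sum_congr rfl fun m hm => Finset.sum_congr rfl fun l _ => ?_
          rw [ih m l N (by simp only [Finset.mem_range] at hm; omega)]
      _ = ∑ m ∈ Finset.range (N + 1), (stirS2 n m : ℤ) * stirS1 m j := by
          refine Finset.sum_congr rfl fun m hm => ?_
          simp only [mul_ite, mul_one, mul_zero]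
          rw [Finset.sum_ite_eq (Finset.range (N + 1)) m
            (fun l => (stirS2 n m : ℤ) * stirS1 l j), if_pos hm]
      _ = if n = j then 1 else 0 := orth_one n j N hN
end

section
/- For every k ≥ 1, the two-variable exponential generating function of the numbers t(n,k,r) satisfies, as an identity of formal power series in ℚ[[x,y]]: ∑_{n,r≥0} t(n,k,r) (x^n/n!) y^r = log^{(k)}(x,y) = (log^{(k)}(x))^y := exp(y·log(log^{(k)}(x))). -/
open Finset

/-- Composition `f(g(x))` of formal power series, for `g` with zero constant
term (so that `coeff d (g^m) = 0` for `m > d` and the sum below is the full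
composition). -/
noncomputable def comp1 (f g : PowerSeries ℚ) : PowerSeries ℚ :=
  PowerSeries.mk fun d => ∑ m ∈ Finset.range (d + 1),
    PowerSeries.coeff m f * PowerSeries.coeff d (g ^ m)

/-- Composition `f(g(x,y))` of a one-variable power series with a two-variable
power series `g` with zero constant term. -/
noncomputable def comp2 (f : PowerSeries ℚ) (g : MvPowerSeries (Fin 2) ℚ) :
    MvPowerSeries (Fin 2) ℚ :=
  fun e => ∑ m ∈ Finset.range (e 0 + e 1 + 1),
    PowerSeries.coeff m f * MvPowerSeries.coeff e (g ^ m)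

/-- The embedding `ℚ[[x]] → ℚ[[x,y]]`, `x ↦ x` (the variable `0`). -/
noncomputable def toX (f : PowerSeries ℚ) : MvPowerSeries (Fin 2) ℚ :=
  fun e => if e 1 = 0 then PowerSeries.coeff (e 0) f else 0

/-- The Maclaurin series of `log(1+u) = ∑_{m ≥ 1} (-1)^{m+1} uᵐ/m`. -/
noncomputable def logOnePlus : PowerSeries ℚ :=
  PowerSeries.mk fun m => if m = 0 then 0 else (-1 : ℚ) ^ (m + 1) / m

/-- The formal logarithm of a power series `f` with constant term `1`:
`log f = log(1 + (f - 1))`. -/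
noncomputable def logOf (f : PowerSeries ℚ) : PowerSeries ℚ :=
  comp1 logOnePlus (f - 1)

/-- `log⁽⁰⁾(x) = eˣ` and `log⁽ᵏ⁾(x) = 1 + log(log⁽ᵏ⁻¹⁾(x))`. -/
noncomputable def logIter : ℕ → PowerSeries ℚ
  | 0 => PowerSeries.exp ℚ
  | k + 1 => 1 + logOf (logIter k)

/-- `log⁽ᵏ⁾(x,y) = (log⁽ᵏ⁾(x))ʸ := exp(y ⬝ log(log⁽ᵏ⁾(x)))` in `ℚ[[x,y]]`. -/
noncomputable def logXY (k : ℕ) : MvPowerSeries (Fin 2) ℚ :=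
  comp2 (PowerSeries.exp ℚ) (MvPowerSeries.X 1 * toX (logOf (logIter k)))

/-- The series `∑_{n,r ≥ 0} t(n,k,r) (xⁿ/n!) yʳ ∈ ℚ[[x,y]]`. -/
noncomputable def tgen (k : ℕ) : MvPowerSeries (Fin 2) ℚ :=
  fun e => (tnum (e 0) k (e 1) : ℚ) / (e 0).factorial

/-!
Put `L_k = log(log⁽ᵏ⁾(x))`. Then `L_0 = x` and `L_{k+1} = log(1 + L_k)`, so `L_k` is the `k`-fold
composite of `log(1 + x)`; in particular `L_{k+1} = L_k ∘ log(1 + x)` as well. Combined with the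
exponential generating function `log(1 + x)ᵐ / m! = ∑ₙ s(n,m) xⁿ / n!`, which follows from
`(1 + x) (log(1 + x)ʳ⁺¹)' = (r + 1) log(1 + x)ʳ` and the recurrence of `s`, this shows by induction
on `k` that the coefficient of `xⁿ / n!` in `L_kʳ / r!` is `t(n,k,r)`. Expanding
`exp(y L_k) = ∑_r yʳ L_kʳ / r!` gives the theorem.
-/

open PowerSeries hiding logOf

open scoped Nat

theorem stirS1_zero (r : ℕ) : stirS1 0 r = if r = 0 then 1 else 0 := by
  simp [stirS1, Polynomial.coeff_one]

theorem stirS1_succ_zero (n : ℕ) : stirS1 (n + 1) 0 = 0 := by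
  rw [stirS1, Polynomial.coeff_zero_eq_eval_zero, Polynomial.eval_prod]
  exact prod_eq_zero (mem_range.2 n.succ_pos) (by simp)

theorem stirS1_succ_succ (n r : ℕ) :
    stirS1 (n + 1) (r + 1) = stirS1 n r - n * stirS1 n (r + 1) := by
  rw [stirS1, prod_range_succ, mul_sub, Polynomial.coeff_sub, Polynomial.coeff_mul_X,
    Polynomial.coeff_mul_C, stirS1, stirS1, mul_comm]

namespace PowerSeries

theorem coeff_subst_eq_sum_range {R : Type*} [CommRing R] {g : R⟦X⟧}
    (hg : constantCoeff g = 0) (f : R⟦X⟧) (d : ℕ) :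
    coeff d (f.subst g) = ∑ m ∈ range (d + 1), coeff m f * coeff d (g ^ m) := by
  rw [coeff_subst' (HasSubst.of_constantCoeff_zero' hg)]
  refine finsum_eq_sum_of_support_subset _ fun m hm => ?_
  by_contra hmd
  refine hm ?_
  have hdm : (d : ℕ∞) < m := by simpa using hmd
  simp only [smul_eq_mul]
  rw [coeff_of_lt_order d (hdm.trans_le (le_order_pow_of_constantCoeff_eq_zero m hg)), mul_zero]

theorem coeff_X_mul_derivative {R : Type*} [CommSemiring R] (f : R⟦X⟧) (n : ℕ) :
    coeff n (X * d⁄dX R f) = n * coeff n f := by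
  cases n with
  | zero => simp
  | succ n => rw [coeff_succ_X_mul, coeff_derivative, mul_comm]; push_cast; rfl

variable {A : Type*} [CommRing A] [Algebra ℚ A]

theorem one_add_X_mul_derivative_log : (1 + X) * d⁄dX A (log A) = 1 := by
  ext n
  rw [deriv_log, add_mul, one_mul, map_add, coeff_one]
  cases n with
  | zero => simp
  | succ n => simp [coeff_succ_X_mul, pow_succ]

theorem log_subst_exp_sub_one : (log A).subst (exp A - 1) = X := by
  have : IsAddTorsionFree A := .of_module_rat A
  have hE : HasSubst (exp A - 1) := HasSubst.exp_sub_one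
  have h_one_add_X : (1 + X : A⟦X⟧).subst (exp A - 1) = exp A := by
    rw [subst_add hE, subst_X hE, ← map_one (C (R := A)), subst_C]
    simp
  refine derivative.ext ?_ ?_
  · calc d⁄dX A ((log A).subst (exp A - 1))
        = (d⁄dX A (log A)).subst (exp A - 1) * (1 + X : A⟦X⟧).subst (exp A - 1) := by
          rw [derivative_subst hE, h_one_add_X, map_sub, derivative_exp,
            Derivation.map_one_eq_zero, sub_zero]
      _ = d⁄dX A X := by
          rw [← subst_mul hE, mul_comm, one_add_X_mul_derivative_log, derivative_X,
            ← map_one (C (R := A)), subst_C]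
          simp
  · rw [constantCoeff_X]
    exact constantCoeff_logOf constantCoeff_exp

theorem one_add_X_mul_derivative_log_pow (r : ℕ) :
    (1 + X) * d⁄dX A (log A ^ (r + 1)) = C (r + 1 : A) * log A ^ r := by
  rw [derivative_pow, add_tsub_cancel_right, mul_left_comm, one_add_X_mul_derivative_log,
    mul_one, map_add, map_natCast, map_one, Nat.cast_succ]

theorem factorial_mul_coeff_log_pow (n r : ℕ) :
    (n ! : ℚ) * coeff n (log ℚ ^ r) = r ! * stirS1 n r := by
  induction n generalizing r with
  | zero => cases r <;> simp [stirS1_zero]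
  | succ n ih =>
    cases r with
    | zero => simp [coeff_one, stirS1_succ_zero]
    | succ r =>
      have hode := congrArg (coeff n) (one_add_X_mul_derivative_log_pow (A := ℚ) r)
      rw [add_mul, one_mul, map_add, coeff_X_mul_derivative, coeff_derivative, coeff_C_mul] at hode
      have h1 := ih r
      have h2 := ih (r + 1)
      rw [Nat.factorial_succ r] at h2
      rw [stirS1_succ_succ, Nat.factorial_succ n, Nat.factorial_succ r]
      push_cast at h1 h2 ⊢
      linear_combination (n ! : ℚ) * hode - n * h2 + (r + 1) * h1

end PowerSeries

theorem comp1_eq_subst (f : ℚ⟦X⟧) {g : ℚ⟦X⟧} (hg : constantCoeff g = 0) :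
    comp1 f g = f.subst g := by
  ext d
  rw [coeff_subst_eq_sum_range hg, comp1, coeff_mk]

theorem logOnePlus_eq_log : logOnePlus = log ℚ := by
  ext m
  simp [logOnePlus]

theorem logOf_eq_powerSeries_logOf {f : ℚ⟦X⟧} (hf : constantCoeff f = 1) :
    logOf f = PowerSeries.logOf f := by
  rw [logOf, logOnePlus_eq_log, comp1_eq_subst _ (by rw [map_sub, hf, map_one, sub_self]),
    PowerSeries.logOf_eq]

theorem constantCoeff_logIter (k : ℕ) : constantCoeff (logIter k) = 1 := by
  induction k with
  | zero => exact constantCoeff_exp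
  | succ k ih =>
    rw [logIter, map_add, logOf_eq_powerSeries_logOf ih, PowerSeries.constantCoeff_logOf ih,
      map_one, add_zero]

theorem constantCoeff_logOf_logIter (k : ℕ) : constantCoeff (logOf (logIter k)) = 0 := by
  rw [logOf_eq_powerSeries_logOf (constantCoeff_logIter k)]
  exact PowerSeries.constantCoeff_logOf (constantCoeff_logIter k)

theorem logOf_logIter_zero : logOf (logIter 0) = X := by
  rw [logOf_eq_powerSeries_logOf (constantCoeff_logIter 0), PowerSeries.logOf_eq, logIter,
    log_subst_exp_sub_one]

theorem logOf_logIter_succ (k : ℕ) :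
    logOf (logIter (k + 1)) = (log ℚ).subst (logOf (logIter k)) := by
  rw [logOf_eq_powerSeries_logOf (constantCoeff_logIter (k + 1)), PowerSeries.logOf_eq, logIter,
    add_sub_cancel_left]

theorem logOf_logIter_succ_eq_subst_log (k : ℕ) :
    logOf (logIter (k + 1)) = (logOf (logIter k)).subst (log ℚ) := by
  induction k with
  | zero => rw [logOf_logIter_succ, logOf_logIter_zero, subst_X HasSubst.log, X_subst]
  | succ k ih =>
    have hL := HasSubst.of_constantCoeff_zero' (constantCoeff_logOf_logIter k)
    rw [logOf_logIter_succ (k + 1), logOf_logIter_succ k,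
      subst_comp_subst_apply hL HasSubst.log, ← ih, ← logOf_logIter_succ]

theorem tnum_eq_zero_of_lt {n k r : ℕ} (h : n < r) : tnum n k r = 0 := by
  cases k with
  | zero => simp [tnum, h.ne]
  | succ k => simp [tnum, Icc_eq_empty_of_lt h]

theorem tnum_succ_eq_sum_range (n k r : ℕ) :
    tnum n (k + 1) r = ∑ m ∈ range (n + 1), stirS1 n m * tnum m k r := by
  rw [tnum]
  refine sum_subset (fun m hm => by simp at hm ⊢; omega) fun m hmn hm => ?_
  rw [tnum_eq_zero_of_lt (by simp at hmn hm; omega), mul_zero]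

theorem factorial_mul_coeff_logOf_logIter_pow (k r n : ℕ) :
    (n ! : ℚ) * coeff n (logOf (logIter k) ^ r) = r ! * tnum n k r := by
  induction k generalizing n with
  | zero =>
    rw [logOf_logIter_zero, coeff_X_pow, tnum]
    split_ifs with h
    · simp [h]
    · simp
  | succ k ih =>
    calc (n ! : ℚ) * coeff n (logOf (logIter (k + 1)) ^ r)
        = ∑ m ∈ range (n + 1), (m ! * coeff m (logOf (logIter k) ^ r))
            * (n ! * coeff n (log ℚ ^ m)) / m ! := by
          rw [logOf_logIter_succ_eq_subst_log, ← subst_pow HasSubst.log,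
            coeff_subst_eq_sum_range constantCoeff_log, mul_sum]
          refine sum_congr rfl fun m _ => ?_
          field_simp
      _ = ∑ m ∈ range (n + 1), (r ! : ℚ) * tnum m k r * (m ! * stirS1 n m) / m ! := by
          simp_rw [ih, factorial_mul_coeff_log_pow]
      _ = r ! * tnum n (k + 1) r := by
          rw [tnum_succ_eq_sum_range, Int.cast_sum, mul_sum]
          refine sum_congr rfl fun m _ => ?_
          push_cast
          field_simp

theorem toX_eq_subst (f : ℚ⟦X⟧) : toX f = f.subst (MvPowerSeries.X 0) := by
  ext e
  rw [coeff_subst_single]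
  have he : e = Finsupp.single 0 (e 0) ↔ e 1 = 0 := by
    rw [Finsupp.ext_iff]
    simp [Fin.forall_fin_two]
  simp only [he]
  rfl

theorem coeff_X_one_pow_mul_toX (f : ℚ⟦X⟧) (m : ℕ) (e : Fin 2 →₀ ℕ) :
    MvPowerSeries.coeff e (MvPowerSeries.X 1 ^ m * toX f) =
      if e 1 = m then coeff (e 0) f else 0 := by
  rw [MvPowerSeries.X_pow_eq, MvPowerSeries.coeff_monomial_mul]
  change (if _ then 1 * toX f (e - Finsupp.single 1 m) else 0) = _
  simp only [Finsupp.single_le_iff, toX, one_mul, Finsupp.tsub_apply, Finsupp.single_eq_same,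
    Finsupp.single_eq_of_ne (show (0 : Fin 2) ≠ 1 by decide), tsub_zero]
  split_ifs <;> first | rfl | omega

theorem coeff_comp2_X_one_mul_toX (p f : ℚ⟦X⟧) (e : Fin 2 →₀ ℕ) :
    MvPowerSeries.coeff e (comp2 p (MvPowerSeries.X 1 * toX f)) =
      coeff (e 1) p * coeff (e 0) (f ^ e 1) := by
  have hterm (m : ℕ) : MvPowerSeries.coeff e ((MvPowerSeries.X 1 * toX f) ^ m) =
      if e 1 = m then coeff (e 0) (f ^ m) else 0 := by
    rw [mul_pow, toX_eq_subst, ← subst_pow (HasSubst.X 0), ← toX_eq_subst,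
      coeff_X_one_pow_mul_toX]
  change ∑ m ∈ range (e 0 + e 1 + 1), _ = _
  rw [sum_eq_single (e 1) (fun m _ hm => by rw [hterm, if_neg (Ne.symm hm), mul_zero])
    (fun h => absurd (mem_range.2 (by omega)) h), hterm, if_pos rfl]

theorem egf_t_eq_logXY_general (k : ℕ) : tgen k = logXY k := by
  ext e
  rw [logXY, coeff_comp2_X_one_mul_toX, coeff_exp]
  have h := factorial_mul_coeff_logOf_logIter_pow k (e 1) (e 0)
  change (tnum (e 0) k (e 1) : ℚ) / (e 0)! = _
  simp only [Algebra.algebraMap_self, RingHom.id_apply]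
  field_simp
  linear_combination -h

/-- For every `k ≥ 1`, `∑_{n,r ≥ 0} t(n,k,r) (xⁿ/n!) yʳ = log⁽ᵏ⁾(x,y)
= (log⁽ᵏ⁾(x))ʸ = exp(y ⬝ log(log⁽ᵏ⁾(x)))` as formal power series in `ℚ[[x,y]]`. -/
theorem egf_t_eq_logXY (k : ℕ) (hk : 1 ≤ k) : tgen k = logXY k :=
  egf_t_eq_logXY_general k
end
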